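/- arXiv:2603.27906 — 2 statements merged into one kernel-verified Lean document; each statement's English description precedes it below -/
import Mathlib

section
/- Fix a dimer cover (perfect matching) of the Aztec diamond graph of size N. For each i ∈ {0,…,N}, exactly N - i of the black vertices on level 2i (those with first coordinate 2i) are matched to a south or west edge. -/
open scoped Classical

/-- Black vertices of the Aztec diamond graph of size `N`. -/
def AzBlack (N : ℕ) (v : ℤ × ℤ) : Prop :=
  ∃ i j : ℤ, 0 ≤ i ∧ i ≤ N ∧ 0 ≤ j ∧ j ≤ (N : ℤ) - 1 ∧ v = (2 * i, 2 * j + 1)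

/-- White vertices of the Aztec diamond graph of size `N`. -/
def AzWhite (N : ℕ) (v : ℤ × ℤ) : Prop :=
  ∃ i j : ℤ, 0 ≤ i ∧ i ≤ (N : ℤ) - 1 ∧ 0 ≤ j ∧ j ≤ N ∧ v = (2 * i + 1, 2 * j)

/-- Edges of the Aztec diamond graph, recorded as (white, black) pairs: both
coordinates differ by exactly 1. -/
def AzEdge (N : ℕ) (w b : ℤ × ℤ) : Prop :=
  AzWhite N w ∧ AzBlack N b ∧ |w.1 - b.1| = 1 ∧ |w.2 - b.2| = 1

/-- A dimer cover of the Aztec diamond graph of size `N`: a set of edges such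
that every white vertex and every black vertex is incident to exactly one edge. -/
def IsDimerCover (N : ℕ) (M : Finset ((ℤ × ℤ) × (ℤ × ℤ))) : Prop :=
  (∀ e ∈ M, AzEdge N e.1 e.2) ∧
  (∀ w : ℤ × ℤ, AzWhite N w → (M.filter (fun e => e.1 = w)).card = 1) ∧
  (∀ b : ℤ × ℤ, AzBlack N b → (M.filter (fun e => e.2 = b)).card = 1)

/-- A black vertex `b` is matched by `M` to a south or west edge iff the white
vertex of its dimer lies to its right (first coordinate `b.1 + 1`). -/
def SWmatched (M : Finset ((ℤ × ℤ) × (ℤ × ℤ))) (b : ℤ × ℤ) : Prop :=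
  ∃ e ∈ M, e.2 = b ∧ e.1.1 = b.1 + 1

/-!
Let `s i` and `n i` count the dimers joining a black vertex on level `2 i` to a white vertex on
level `2 i + 1` (a south or west edge) and on level `2 i - 1` respectively. Every one of the `N`
black vertices on level `2 i` is covered exactly once, so `s i + n i = N`; every one of the `N + 1`
white vertices on level `2 i + 1` is covered exactly once, so `s i + n (i + 1) = N + 1`; and
`n 0 = 0`. Hence `n i = i` and `s i = N - i`.
-/

open Finset

lemma card_filter_eq_card_of_fiber_card_eq_one {α β : Type*} [DecidableEq β]
    {s : Finset α} {t : Finset β} {f : α → β} {p : α → Prop} [DecidablePred p]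
    (hp : ∀ a ∈ s, p a ↔ f a ∈ t) (hfib : ∀ b ∈ t, (s.filter (f · = b)).card = 1) :
    (s.filter p).card = t.card := by
  have hmaps : ∀ a ∈ s.filter p, f a ∈ t := fun a ha =>
    (hp a (mem_filter.mp ha).1).mp (mem_filter.mp ha).2
  rw [card_eq_sum_card_fiberwise hmaps, card_eq_sum_ones t]
  refine sum_congr rfl fun b hb => ?_
  rw [filter_filter, ← hfib b hb]
  refine congrArg card (filter_congr fun a ha => ?_)
  exact ⟨And.right, fun hab => ⟨(hp a ha).mpr (hab ▸ hb), hab⟩⟩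

def blackLevel (N i : ℕ) : Finset (ℤ × ℤ) :=
  (range N).image fun j : ℕ => (2 * (i : ℤ), 2 * (j : ℤ) + 1)

def whiteLevel (N i : ℕ) : Finset (ℤ × ℤ) :=
  (range (N + 1)).image fun j : ℕ => (2 * (i : ℤ) + 1, 2 * (j : ℤ))

section Levels

variable {N i : ℕ} {v : ℤ × ℤ}

lemma card_blackLevel : (blackLevel N i).card = N := by
  rw [blackLevel, card_image_of_injective _ fun a b h => by simp at h; omega, card_range]

lemma card_whiteLevel : (whiteLevel N i).card = N + 1 := by
  rw [whiteLevel, card_image_of_injective _ fun a b h => by simp at h; omega, card_range]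

lemma azBlack_of_mem_blackLevel (hi : i ≤ N) (hv : v ∈ blackLevel N i) : AzBlack N v := by
  obtain ⟨j, hj, rfl⟩ := mem_image.mp hv
  exact ⟨i, j, by omega, by omega, by omega, by simp at hj; omega, rfl⟩

lemma azWhite_of_mem_whiteLevel (hi : i < N) (hv : v ∈ whiteLevel N i) : AzWhite N v := by
  obtain ⟨j, hj, rfl⟩ := mem_image.mp hv
  exact ⟨i, j, by omega, by omega, by omega, by simp at hj; omega, rfl⟩

lemma AzBlack.mem_blackLevel_iff (hv : AzBlack N v) : v ∈ blackLevel N i ↔ v.1 = 2 * i := by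
  obtain ⟨a, b, -, -, hb0, hbN, rfl⟩ := hv
  simp only [blackLevel, mem_image, mem_range, Prod.mk.injEq]
  exact ⟨fun ⟨j, _, hi, _⟩ => hi.symm, fun hi => ⟨b.toNat, by omega, hi.symm, by omega⟩⟩

lemma AzWhite.mem_whiteLevel_iff (hv : AzWhite N v) : v ∈ whiteLevel N i ↔ v.1 = 2 * i + 1 := by
  obtain ⟨a, b, -, -, hb0, hbN, rfl⟩ := hv
  simp only [whiteLevel, mem_image, mem_range, Prod.mk.injEq]
  exact ⟨fun ⟨j, _, hi, _⟩ => hi.symm, fun hi => ⟨b.toNat, by omega, hi.symm, by omega⟩⟩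

/- Here `j` ranges over `ℤ`: `range N` is lifted to a `Finset ℤ` through the `Finset`
monad. -/
lemma card_filter_swMatched_range (M : Finset ((ℤ × ℤ) × (ℤ × ℤ))) :
    ((range N).filter fun j => SWmatched M (2 * (i : ℤ), 2 * (j : ℤ) + 1)).card =
      ((blackLevel N i).filter (SWmatched M)).card := by
  simp only [pure_def, bind_def, sup_singleton_apply, filter_image, blackLevel]
  rw [@card_image_of_injective _ _ _ (fun a b => Classical.propDecidable (a = b)) _
    Nat.cast_injective, card_image_of_injective _ fun a b h => by simp at h; omega]

end Levels

noncomputable def swCount (M : Finset ((ℤ × ℤ) × (ℤ × ℤ))) (i : ℕ) : ℕ :=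
  (M.filter fun e => e.2.1 = 2 * (i : ℤ) ∧ e.1.1 = 2 * (i : ℤ) + 1).card

noncomputable def neCount (M : Finset ((ℤ × ℤ) × (ℤ × ℤ))) (i : ℕ) : ℕ :=
  (M.filter fun e => e.2.1 = 2 * (i : ℤ) ∧ e.1.1 = 2 * (i : ℤ) - 1).card

namespace IsDimerCover

variable {N : ℕ} {M : Finset ((ℤ × ℤ) × (ℤ × ℤ))} (hM : IsDimerCover N M)
include hM

lemma eq_of_snd_eq {e e' : (ℤ × ℤ) × (ℤ × ℤ)} (he : e ∈ M) (he' : e' ∈ M) (h : e.2 = e'.2) :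
    e = e' :=
  card_le_one.mp (hM.2.2 e.2 (hM.1 e he).2.1).le e (mem_filter.mpr ⟨he, rfl⟩)
    e' (mem_filter.mpr ⟨he', h.symm⟩)

lemma white_fst_eq_add_one_or_sub_one {e : (ℤ × ℤ) × (ℤ × ℤ)} (he : e ∈ M) :
    e.1.1 = e.2.1 + 1 ∨ e.1.1 = e.2.1 - 1 := by
  have h := (hM.1 e he).2.2.1
  rw [abs_eq zero_le_one] at h
  omega

lemma card_filter_black_fst_eq {i : ℕ} (hi : i ≤ N) :
    (M.filter fun e => e.2.1 = 2 * (i : ℤ)).card = N := by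
  rw [← card_blackLevel (N := N) (i := i)]
  refine card_filter_eq_card_of_fiber_card_eq_one (f := Prod.snd)
    (fun e he => ((hM.1 e he).2.1.mem_blackLevel_iff).symm) fun v hv => ?_
  exact hM.2.2 v (azBlack_of_mem_blackLevel hi hv)

lemma card_filter_white_fst_eq {i : ℕ} (hi : i < N) :
    (M.filter fun e => e.1.1 = 2 * (i : ℤ) + 1).card = N + 1 := by
  rw [← card_whiteLevel (N := N) (i := i)]
  refine card_filter_eq_card_of_fiber_card_eq_one (f := Prod.fst)
    (fun e he => ((hM.1 e he).1.mem_whiteLevel_iff).symm) fun v hv => ?_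
  exact hM.2.1 v (azWhite_of_mem_whiteLevel hi hv)

lemma swCount_add_neCount {i : ℕ} (hi : i ≤ N) : swCount M i + neCount M i = N := by
  rw [← hM.card_filter_black_fst_eq hi, swCount, neCount, ← filter_filter, ← filter_filter]
  convert card_filter_add_card_filter_not
    (p := fun e : (ℤ × ℤ) × (ℤ × ℤ) => e.1.1 = 2 * (i : ℤ) + 1) using 3
  refine filter_congr fun e he => ?_
  obtain ⟨heM, hb⟩ := mem_filter.mp he
  have := hM.white_fst_eq_add_one_or_sub_one heM
  omega

lemma swCount_add_neCount_succ {i : ℕ} (hi : i < N) :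
    swCount M i + neCount M (i + 1) = N + 1 := by
  rw [← hM.card_filter_white_fst_eq hi, ← card_filter_add_card_filter_not
    (p := fun e : (ℤ × ℤ) × (ℤ × ℤ) => e.2.1 = 2 * (i : ℤ)), filter_filter, filter_filter,
    swCount, neCount]
  congr 2 <;> refine filter_congr fun e he => ?_ <;> have := hM.white_fst_eq_add_one_or_sub_one he <;> push_cast <;>
    omega

lemma neCount_zero : neCount M 0 = 0 := by
  refine card_eq_zero.mpr (filter_eq_empty_iff.mpr fun e he => ?_)
  obtain ⟨⟨a, b, ha, -, -, -, hw⟩, -⟩ := hM.1 e he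
  rw [hw]
  omega

lemma swCount_eq {i : ℕ} (hi : i ≤ N) : swCount M i = N - i := by
  induction i with
  | zero => simpa [hM.neCount_zero] using hM.swCount_add_neCount hi
  | succ i ih =>
    have := hM.swCount_add_neCount_succ (i := i) (by omega)
    have := hM.swCount_add_neCount hi
    have := ih (by omega)
    omega

lemma card_filter_swMatched_blackLevel {i : ℕ} (hi : i ≤ N) :
    ((blackLevel N i).filter (SWmatched M)).card = swCount M i := by
  refine (card_filter_eq_card_of_fiber_card_eq_one (f := Prod.snd) (fun e he => ?_)
    fun v hv => hM.2.2 v (azBlack_of_mem_blackLevel hi (mem_filter.mp hv).1)).symm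
  rw [mem_filter, (hM.1 e he).2.1.mem_blackLevel_iff]
  refine ⟨fun ⟨hb, hw⟩ => ⟨hb, e, he, rfl, hb ▸ hw⟩, fun ⟨hb, e', he', hbe, hw⟩ => ⟨hb, ?_⟩⟩
  rw [hM.eq_of_snd_eq he he' hbe.symm, hw, hb]

end IsDimerCover

theorem stmt_11 (N : ℕ) (M : Finset ((ℤ × ℤ) × (ℤ × ℤ))) (hM : IsDimerCover N M)
    (i : ℕ) (hi : i ≤ N) :
    ((Finset.range N).filter
        (fun j => SWmatched M (2 * (i : ℤ), 2 * (j : ℤ) + 1))).card = N - i := by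
  rw [card_filter_swMatched_range, hM.card_filter_swMatched_blackLevel hi, hM.swCount_eq hi]
end

section
/- Fix a dimer cover of the Aztec diamond graph of size N, and for 1 ≤ s ≤ t ≤ N let u_s^t denote the vertical coordinate-index of the s-th lowest black vertex on level 2(N - t) matched to a south or west edge (so the particle positions on level N-t are u_1^t ≤ … ≤ u_t^t). Then the particles interlace: u_s^{t+1} ≤ u_s^t ≤ u_{s+1}^{t+1} for all 1 ≤ s ≤ t ≤ N-1. -/
open scoped Classical

/-- The black vertex `(x, 2j+1)` is matched by `M` to a south or west edge. -/
def SWparticle (M : Finset ((ℤ × ℤ) × (ℤ × ℤ))) (x j : ℤ) : Prop :=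
  ∃ e ∈ M, e.2 = (x, 2 * j + 1) ∧ e.1.1 = x + 1

/-!
Let `2i + 1` be the white column between the black columns `2i` (level `t + 1`) and `2i + 2`
(level `t`). For every `k`, the black vertices of rows `≤ k` matched into this white column are the
particles on column `2i` together with the non-particles on column `2i + 2`. They cover the whites of
rows `≤ k` and are covered by the whites of rows `≤ k + 1`; so if `p` and `p'` count the particles of
rows `≤ k` on levels `t` and `t + 1`, then `k + 1 ≤ p' + (k + 1 - p) ≤ k + 2`, i.e. `p ≤ p' ≤ p + 1`.
For strictly increasing enumerations, these counting inequalities for all `k` are exactly the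
interlacing inequalities.
-/

open Finset

section Interlacing

variable {α : Type*} [LinearOrder α]

theorem StrictMonoOn.le_iff_le_card_filter {a : ℕ → α} {n s : ℕ}
    (ha : StrictMonoOn a (Set.Icc 1 n)) (hs : s ∈ Set.Icc 1 n) (k : α) :
    a s ≤ k ↔ s ≤ #{r ∈ Icc 1 n | a r ≤ k} := by
  constructor
  · intro hk
    have hsub : Icc 1 s ⊆ {r ∈ Icc 1 n | a r ≤ k} := fun r hr => by
      simp only [mem_Icc] at hr
      have hr' : r ∈ Set.Icc 1 n := ⟨hr.1, hr.2.trans hs.2⟩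
      exact mem_filter.mpr ⟨mem_Icc.mpr hr', (ha.monotoneOn hr' hs hr.2).trans hk⟩
    simpa using card_le_card hsub
  · intro hcard
    by_contra! hk
    have hsub : {r ∈ Icc 1 n | a r ≤ k} ⊆ Icc 1 (s - 1) := fun r hr => by
      simp only [mem_filter, mem_Icc] at hr ⊢
      refine ⟨hr.1.1, Nat.le_sub_one_of_lt (lt_of_not_ge fun hsr => ?_)⟩
      exact (hk.trans_le (ha.monotoneOn hs hr.1 hsr)).not_ge hr.2
    have := card_le_card hsub
    simp only [Nat.card_Icc] at this
    have := hs.1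
    omega

theorem interlace_of_card_filter_le {a b : ℕ → α} {t : ℕ}
    (ha : StrictMonoOn a (Set.Icc 1 t)) (hb : StrictMonoOn b (Set.Icc 1 (t + 1)))
    (hcount : ∀ k, #{r ∈ Icc 1 t | a r ≤ k} ≤ #{r ∈ Icc 1 (t + 1) | b r ≤ k} ∧
      #{r ∈ Icc 1 (t + 1) | b r ≤ k} ≤ #{r ∈ Icc 1 t | a r ≤ k} + 1)
    {s : ℕ} (hs : s ∈ Set.Icc 1 t) : b s ≤ a s ∧ a s ≤ b (s + 1) := by
  have hs' : s ∈ Set.Icc 1 (t + 1) := ⟨hs.1, hs.2.trans t.le_succ⟩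
  have hs1 : s + 1 ∈ Set.Icc 1 (t + 1) := ⟨Nat.le_add_left 1 s, Nat.succ_le_succ hs.2⟩
  constructor
  · rw [hb.le_iff_le_card_filter hs']
    exact ((ha.le_iff_le_card_filter hs _).mp le_rfl).trans (hcount _).1
  · rw [ha.le_iff_le_card_filter hs]
    have := (hb.le_iff_le_card_filter hs1 _).mp le_rfl
    have := (hcount (b (s + 1))).2
    omega

end Interlacing

theorem AzEdge.exists_coords {N : ℕ} {w b : ℤ × ℤ} (h : AzEdge N w b) :
    ∃ i m j : ℤ, w = (2 * i + 1, 2 * m) ∧ (b = (2 * i, 2 * j + 1) ∨ b = (2 * i + 2, 2 * j + 1)) ∧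
      0 ≤ j ∧ j ≤ (N : ℤ) - 1 ∧ (m = j ∨ m = j + 1) := by
  obtain ⟨⟨i, m, -, -, -, -, rfl⟩, ⟨i', j, -, -, hj0, hjN, rfl⟩, h1, h2⟩ := h
  rw [abs_eq zero_le_one] at h1 h2
  refine ⟨i, m, j, rfl, ?_, hj0, hjN, by omega⟩
  simp only [Prod.mk.injEq, and_true]
  omega

theorem swParticle_iff {M : Finset ((ℤ × ℤ) × (ℤ × ℤ))} {x j : ℤ} :
    SWparticle M x j ↔ ∃ y, ((x + 1, y), (x, 2 * j + 1)) ∈ M := by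
  constructor
  · rintro ⟨⟨⟨_, y⟩, _⟩, he, rfl, rfl⟩
    exact ⟨y, he⟩
  · rintro ⟨y, he⟩
    exact ⟨_, he, rfl, rfl⟩

noncomputable def particlesUpTo (M : Finset ((ℤ × ℤ) × (ℤ × ℤ))) (x k : ℤ) : Finset ℤ :=
  {j ∈ Icc 0 k | SWparticle M x j}

/-- For a dimer cover, the black vertices of rows `0, …, k` matched into the white column `2i + 1`:
the particles `inl j` of column `2i` and the non-particles `inr j` of column `2i + 2`. -/
noncomputable def matchedIntoColumn (M : Finset ((ℤ × ℤ) × (ℤ × ℤ))) (i k : ℤ) :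
    Finset (ℤ ⊕ ℤ) :=
  (particlesUpTo M (2 * i) k).disjSum {j ∈ Icc 0 k | ¬SWparticle M (2 * i + 2) j}

def flankingBlack (i : ℤ) : ℤ ⊕ ℤ → ℤ × ℤ :=
  Sum.elim (fun j => (2 * i, 2 * j + 1)) (fun j => (2 * i + 2, 2 * j + 1))

theorem flankingBlack_injective (i : ℤ) : Function.Injective (flankingBlack i) := by
  rintro (j | j) (j' | j') h <;>
    simp only [flankingBlack, Sum.elim_inl, Sum.elim_inr, Prod.mk.injEq] at h <;>
    (congr 1; omega)

namespace IsDimerCover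

variable {N : ℕ} {M : Finset ((ℤ × ℤ) × (ℤ × ℤ))}

theorem snd_eq_of_mem (hM : IsDimerCover N M) {w b b' : ℤ × ℤ} (h : (w, b) ∈ M)
    (h' : (w, b') ∈ M) : b = b' :=
  congrArg Prod.snd <| card_le_one.mp (hM.2.1 w (hM.1 _ h).1).le _
    (mem_filter.mpr ⟨h, rfl⟩) _ (mem_filter.mpr ⟨h', rfl⟩)

theorem fst_eq_of_mem (hM : IsDimerCover N M) {w w' b : ℤ × ℤ} (h : (w, b) ∈ M)
    (h' : (w', b) ∈ M) : w = w' :=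
  congrArg Prod.fst <| card_le_one.mp (hM.2.2 b (hM.1 _ h).2.1).le _
    (mem_filter.mpr ⟨h, rfl⟩) _ (mem_filter.mpr ⟨h', rfl⟩)

theorem exists_mem_of_azWhite (hM : IsDimerCover N M) {w : ℤ × ℤ} (hw : AzWhite N w) :
    ∃ b, (w, b) ∈ M := by
  obtain ⟨e, he⟩ := card_eq_one.mp (hM.2.1 w hw)
  obtain ⟨heM, rfl⟩ := mem_filter.mp (he ▸ mem_singleton_self e)
  exact ⟨e.2, heM⟩

theorem exists_mem_of_azBlack (hM : IsDimerCover N M) {b : ℤ × ℤ} (hb : AzBlack N b) :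
    ∃ w, (w, b) ∈ M := by
  obtain ⟨e, he⟩ := card_eq_one.mp (hM.2.2 b hb)
  obtain ⟨heM, rfl⟩ := mem_filter.mp (he ▸ mem_singleton_self e)
  exact ⟨e.1, heM⟩

theorem swParticle_bounds (hM : IsDimerCover N M) {x j : ℤ} (h : SWparticle M x j) :
    0 ≤ j ∧ j ≤ (N : ℤ) - 1 := by
  obtain ⟨y, he⟩ := swParticle_iff.mp h
  obtain ⟨_, _, j', -, hb, hj0, hjN, -⟩ := (hM.1 _ he).exists_coords
  simp only [Prod.mk.injEq] at hb
  omega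

theorem not_swParticle_iff (hM : IsDimerCover N M) {x j : ℤ} (hb : AzBlack N (x, 2 * j + 1)) :
    ¬SWparticle M x j ↔ ∃ y, ((x - 1, y), (x, 2 * j + 1)) ∈ M := by
  rw [swParticle_iff]
  constructor
  · intro hSW
    obtain ⟨⟨x', y⟩, he⟩ := hM.exists_mem_of_azBlack hb
    obtain ⟨_, _, _, hw, hb', -⟩ := (hM.1 _ he).exists_coords
    simp only [Prod.mk.injEq] at hw hb'
    obtain rfl | rfl : x' = x + 1 ∨ x' = x - 1 := by omega
    · exact (hSW ⟨y, he⟩).elim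
    · exact ⟨y, he⟩
  · rintro ⟨y, he⟩ ⟨y', he'⟩
    have := congrArg Prod.fst (hM.fst_eq_of_mem he he')
    omega

theorem exists_row_of_mem (hM : IsDimerCover N M) {x y x' j : ℤ}
    (he : ((x, y), (x', 2 * j + 1)) ∈ M) : ∃ m, y = 2 * m ∧ (m = j ∨ m = j + 1) := by
  obtain ⟨_, m, _, hw, hb, -, -, hjm⟩ := (hM.1 _ he).exists_coords
  simp only [Prod.mk.injEq] at hw hb
  exact ⟨m, hw.2, by omega⟩

theorem card_Icc_le_card_matchedIntoColumn (hM : IsDimerCover N M) {i k : ℤ} (hi0 : 0 ≤ i)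
    (hiN : i + 1 ≤ N) (hkN : k ≤ (N : ℤ) - 1) :
    #(Icc 0 k) ≤ #(matchedIntoColumn M i k) := by
  refine card_le_card_of_forall_subsingleton
    (fun m σ => ((2 * i + 1, 2 * m), flankingBlack i σ) ∈ M) (fun m hm => ?_) ?_
  · rw [mem_Icc] at hm
    obtain ⟨b, he⟩ := hM.exists_mem_of_azWhite ⟨i, m, hi0, by omega, hm.1, by omega, rfl⟩
    obtain ⟨iw, mw, j, hw, hb, hj0, -, hjm⟩ := (hM.1 _ he).exists_coords
    obtain ⟨rfl, rfl⟩ : iw = i ∧ mw = m := by simp only [Prod.mk.injEq] at hw; omega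
    have hj : j ∈ Icc 0 k := mem_Icc.mpr ⟨hj0, by omega⟩
    rcases hb with rfl | rfl
    · exact ⟨.inl j, inl_mem_disjSum.mpr (mem_filter.mpr ⟨hj, swParticle_iff.mpr ⟨_, he⟩⟩), he⟩
    · refine ⟨.inr j, inr_mem_disjSum.mpr (mem_filter.mpr ⟨hj, ?_⟩), he⟩
      exact (hM.not_swParticle_iff (hM.1 _ he).2.1).mpr ⟨_, by convert he using 3; ring⟩
  · rintro σ - m ⟨-, hm⟩ m' ⟨-, hm'⟩
    have := congrArg Prod.snd (hM.fst_eq_of_mem hm hm')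
    simp only at this
    omega

theorem card_matchedIntoColumn_le_card_Icc (hM : IsDimerCover N M) {i k : ℤ} (hi0 : 0 ≤ i)
    (hiN : i + 1 ≤ N) (hkN : k ≤ (N : ℤ) - 1) :
    #(matchedIntoColumn M i k) ≤ #(Icc 0 (k + 1)) := by
  refine card_le_card_of_forall_subsingleton
    (fun σ m => ((2 * i + 1, 2 * m), flankingBlack i σ) ∈ M) (fun σ hσ => ?_) ?_
  · rcases σ with j | j <;>
      simp only [matchedIntoColumn, particlesUpTo, inl_mem_disjSum, inr_mem_disjSum, mem_filter,
        mem_Icc] at hσ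
    · obtain ⟨y, he⟩ := swParticle_iff.mp hσ.2
      obtain ⟨m, rfl, hm⟩ := hM.exists_row_of_mem he
      exact ⟨m, mem_Icc.mpr (by omega), he⟩
    · have hb : AzBlack N (2 * i + 2, 2 * j + 1) :=
        ⟨i + 1, j, by omega, hiN, hσ.1.1, by omega, by ring_nf⟩
      obtain ⟨y, he⟩ := (hM.not_swParticle_iff hb).mp hσ.2
      rw [show 2 * i + 2 - 1 = 2 * i + 1 by ring] at he
      obtain ⟨m, rfl, hm⟩ := hM.exists_row_of_mem he
      exact ⟨m, mem_Icc.mpr (by omega), he⟩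
  · rintro m - σ ⟨-, hσ⟩ σ' ⟨-, hσ'⟩
    exact flankingBlack_injective i (hM.snd_eq_of_mem hσ hσ')

theorem particlesUpTo_eq_of_le (hM : IsDimerCover N M) {x k : ℤ} (hk : (N : ℤ) - 1 ≤ k) :
    particlesUpTo M x k = particlesUpTo M x (N - 1) := by
  ext j
  simp only [particlesUpTo, mem_filter, mem_Icc]
  constructor
  · exact fun h => ⟨⟨h.1.1, (hM.swParticle_bounds h.2).2⟩, h.2⟩
  · exact fun h => ⟨⟨h.1.1, h.1.2.trans hk⟩, h.2⟩

theorem card_particlesUpTo_interlace_of_le (hM : IsDimerCover N M) {i k : ℤ} (hi0 : 0 ≤ i)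
    (hiN : i + 1 ≤ N) (hk0 : 0 ≤ k) (hkN : k ≤ (N : ℤ) - 1) :
    #(particlesUpTo M (2 * i + 2) k) ≤ #(particlesUpTo M (2 * i) k) ∧
      #(particlesUpTo M (2 * i) k) ≤ #(particlesUpTo M (2 * i + 2) k) + 1 := by
  have hlower := hM.card_Icc_le_card_matchedIntoColumn hi0 hiN hkN
  have hupper := hM.card_matchedIntoColumn_le_card_Icc hi0 hiN hkN
  have hsplit := card_filter_add_card_filter_not (s := Icc 0 k) (SWparticle M (2 * i + 2))
  rw [matchedIntoColumn, card_disjSum] at hlower hupper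
  rw [← particlesUpTo] at hsplit
  simp only [Int.card_Icc] at hlower hupper hsplit
  omega

theorem card_particlesUpTo_interlace (hM : IsDimerCover N M) {i : ℤ} (hi0 : 0 ≤ i)
    (hiN : i + 1 ≤ N) (k : ℤ) :
    #(particlesUpTo M (2 * i + 2) k) ≤ #(particlesUpTo M (2 * i) k) ∧
      #(particlesUpTo M (2 * i) k) ≤ #(particlesUpTo M (2 * i + 2) k) + 1 := by
  rcases lt_or_ge k 0 with hk | hk
  · simp [particlesUpTo, Icc_eq_empty_of_lt hk]
  rcases le_or_gt k (N - 1) with hkN | hkN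
  · exact hM.card_particlesUpTo_interlace_of_le hi0 hiN hk hkN
  · rw [hM.particlesUpTo_eq_of_le hkN.le, hM.particlesUpTo_eq_of_le hkN.le]
    exact hM.card_particlesUpTo_interlace_of_le hi0 hiN (by omega) le_rfl

theorem card_filter_le_eq_card_particlesUpTo (hM : IsDimerCover N M) {a : ℕ → ℤ} {n : ℕ}
    {x : ℤ} (ha : Set.InjOn a (Set.Icc 1 n))
    (henum : ∀ j : ℤ, SWparticle M x j ↔ ∃ s, 1 ≤ s ∧ s ≤ n ∧ a s = j) (k : ℤ) :
    #{r ∈ Icc 1 n | a r ≤ k} = #(particlesUpTo M x k) := by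
  refine card_nbij a (fun r hr => ?_) (ha.mono fun r hr => ?_) (fun j hj => ?_)
  · simp only [mem_coe, mem_filter, mem_Icc] at hr
    have hsw := (henum (a r)).mpr ⟨r, hr.1.1, hr.1.2, rfl⟩
    simp only [particlesUpTo, mem_coe, mem_filter, mem_Icc]
    exact ⟨⟨(hM.swParticle_bounds hsw).1, hr.2⟩, hsw⟩
  · simp only [mem_coe, mem_filter, mem_Icc] at hr
    exact hr.1
  · simp only [particlesUpTo, mem_coe, mem_filter, mem_Icc] at hj
    obtain ⟨s, hs1, hsn, rfl⟩ := (henum j).mp hj.2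
    exact ⟨s, by simp [hs1, hsn, hj.1.2], rfl⟩

end IsDimerCover

theorem stmt_12 (N : ℕ) (M : Finset ((ℤ × ℤ) × (ℤ × ℤ))) (hM : IsDimerCover N M)
    (u : ℕ → ℕ → ℤ)
    -- for each level `t`, `u · t` strictly increasingly enumerates the
    -- particle positions on level `2(N - t)`
    (hmono : ∀ t, 1 ≤ t → t ≤ N → ∀ s, 1 ≤ s → s < t → u s t < u (s + 1) t)
    (henum : ∀ t, 1 ≤ t → t ≤ N → ∀ j : ℤ,
      SWparticle M (2 * ((N : ℤ) - t)) j ↔ ∃ s, 1 ≤ s ∧ s ≤ t ∧ u s t = j) :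
    ∀ t s, 1 ≤ s → s ≤ t → t ≤ N - 1 →
      u s (t + 1) ≤ u s t ∧ u s t ≤ u (s + 1) (t + 1) := by
  intro t s hs hst htN
  have hstrict : ∀ t, 1 ≤ t → t ≤ N → StrictMonoOn (u · t) (Set.Icc 1 t) :=
    fun t h1 h2 => strictMonoOn_of_lt_add_one Set.ordConnected_Icc
      fun r _ hr hr1 => hmono t h1 h2 r hr.1 hr1.2
  have hcount : ∀ t, 1 ≤ t → t ≤ N → ∀ k,
      #{r ∈ Icc 1 t | u r t ≤ k} = #(particlesUpTo M (2 * ((N : ℤ) - t)) k) :=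
    fun t h1 h2 => hM.card_filter_le_eq_card_particlesUpTo (hstrict t h1 h2).injOn (henum t h1 h2)
  refine interlace_of_card_filter_le (hstrict t (by omega) (by omega))
    (hstrict (t + 1) (by omega) (by omega)) (fun k => ?_) ⟨hs, hst⟩
  rw [hcount t (by omega) (by omega), hcount (t + 1) (by omega) (by omega)]
  have hlevel : 2 * ((N : ℤ) - t) = 2 * (N - t - 1) + 2 := by ring
  have hlevel' : 2 * ((N : ℤ) - (t + 1 : ℕ)) = 2 * (N - t - 1) := by push_cast; ring
  rw [hlevel, hlevel']
  exact hM.card_particlesUpTo_interlace (by omega) (by omega) k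
end
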